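/- Let w, s1 be strings with s1 nonempty, l ≥ 1, and natural numbers n1 ≤ n2 with n2 + l ≤ |w|. Then applying the insert i(n1,s1) followed by the lifted delete d(n2+|s1|, l) yields the same string as applying the delete d(n2,l) followed by the (unlifted) insert i(n1,s1); that is, del(n2+|s1|, l)(ins(n1, s1)(w)) = ins(n1, s1)(del(n2, l)(w)). -/

import Mathlib

/-- Insert `s` at position `n` in the string `w`. -/
def ins {α : Type*} (n : ℕ) (s w : List α) : List α :=
  w.take n ++ s ++ w.drop n

/-- Delete `l` characters starting at position `n` in the string `w`. -/
def del {α : Type*} (n l : ℕ) (w : List α) : List α :=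
  w.take n ++ w.drop (n + l)

/-
Split `w` as `u ++ v` with `|u| = n1`. The insert turns this into `u ++ s1 ++ v`, and since
`n1 ≤ n2` the delete, before or after the insert, leaves `u` (and `s1`) alone and removes the
same `l` characters of `v`, starting at offset `n2 - n1`. If `w` is shorter than `n1`, the insert
appends `s1` and both deletes start beyond the end of `w`, so neither removes anything.
-/
section Edit

variable {α : Type*}

theorem ins_length_append (s u v : List α) : ins u.length s (u ++ v) = u ++ s ++ v := by
  simp [ins]

theorem ins_of_length_le {n : ℕ} (s : List α) {w : List α} (h : w.length ≤ n) :
    ins n s w = w ++ s := by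
  simp [ins, List.take_of_length_le h, List.drop_of_length_le h]

theorem del_of_length_le {n : ℕ} (l : ℕ) {w : List α} (h : w.length ≤ n) : del n l w = w := by
  simp [del, List.take_of_length_le h, List.drop_of_length_le (h.trans (Nat.le_add_right n l))]

theorem del_append_of_length_le {n : ℕ} (l : ℕ) {u : List α} (v : List α) (h : u.length ≤ n) :
    del n l (u ++ v) = u ++ del (n - u.length) l v := by
  simp only [del, List.take_append, List.drop_append, List.take_of_length_le h,
    List.drop_of_length_le (h.trans (Nat.le_add_right n l)), List.nil_append, List.append_assoc]
  congr 3
  omega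

end Edit

theorem insert_then_delete_converge_general {α : Type*}
    (w s1 : List α) (l : ℕ)
    (n1 n2 : ℕ) (h12 : n1 ≤ n2) :
    del (n2 + s1.length) l (ins n1 s1 w) = ins n1 s1 (del n2 l w) := by
  rcases le_or_gt n1 w.length with hn1 | hw
  · obtain ⟨u, v, rfl, rfl⟩ : ∃ u v, w = u ++ v ∧ u.length = n1 :=
      ⟨w.take n1, w.drop n1, (List.take_append_drop n1 w).symm, List.length_take_of_le hn1⟩
    rw [ins_length_append, del_append_of_length_le l v h12, ins_length_append, List.append_assoc,
      del_append_of_length_le l _ (by omega), del_append_of_length_le l v (by omega)]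
    simp only [List.append_assoc]
    congr 3
    omega
  · rw [del_of_length_le l (show w.length ≤ n2 by omega), ins_of_length_le s1 hw.le,
      del_of_length_le l (by rw [List.length_append]; omega)]

/-- An insert to the left of (or at the start of) a delete: the delete is lifted. -/
theorem insert_then_delete_converge {α : Type*}
    (w s1 : List α) (hs1 : s1 ≠ []) (l : ℕ) (hl : 1 ≤ l)
    (n1 n2 : ℕ) (h12 : n1 ≤ n2) (h2 : n2 + l ≤ w.length) :
    del (n2 + s1.length) l (ins n1 s1 w) = ins n1 s1 (del n2 l w) :=
  insert_then_delete_converge_general w s1 l n1 n2 h12
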